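/- Fix $n \in \mathbb{N}$ and $0 < R_1 < R_2 < 1$. Let $t \in [0, \tfrac{\gamma(R_1)-1}{n})$ and $k = \lceil nt \rceil$. Then $g(t; R_2) \leq g(t; R_1)$, where $g(t;R) = \frac{R(n-k)}{nR - k}\mathbb{P}(\mathrm{Bin}(n,R) \leq k)$. That is, $g$ is non-increasing in its second argument on this region. -/

import Mathlib

open MeasureTheory ProbabilityTheory Finset

/-- CDF of a Binomial(n,R) at k: P(Bin(n,R) ≤ k). -/
noncomputable def binCDF (n k : ℕ) (R : ℝ) : ℝ :=
  ∑ j ∈ Finset.range (k + 1), (n.choose j : ℝ) * R ^ j * (1 - R) ^ (n - j)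

/-- Upper tail of a Binomial(n,p) at t: P(Bin(n,p) ≥ t). -/
noncomputable def binTail (n t : ℕ) (p : ℝ) : ℝ :=
  ∑ j ∈ Finset.Icc t n, (n.choose j : ℝ) * p ^ j * (1 - p) ^ (n - j)

/-- γ(R) = min {r ∈ ℕ : r ≥ n R}. -/
noncomputable def gam (n : ℕ) (R : ℝ) : ℕ := sInf {r : ℕ | (n : ℝ) * R ≤ r}

/-- The function g(t; R) from the paper. -/
noncomputable def g (n : ℕ) (R t : ℝ) : ℝ :=
  if t = ((gam n R : ℝ) - 1) / n then
    max 1 (R * ((n : ℝ) - ((gam n R : ℝ) - 1)) / ((n : ℝ) * R - ((gam n R : ℝ) - 1)) *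
      binCDF n (gam n R - 1) R)
  else
    R * ((n : ℝ) - (⌈(n : ℝ) * t⌉ : ℝ)) / ((n : ℝ) * R - (⌈(n : ℝ) * t⌉ : ℝ)) *
      binCDF n (⌈(n : ℝ) * t⌉).toNat R

/-!
Since `γ(R₁) = ⌈n R₁⌉`, the hypothesis on `t` gives `k = ⌈n t⌉ < n R₁ < n R₂`, so both values of `g`
are given by the generic formula with the same `k`. The prefactor `R (n - k) / (n R - k)` decreases
in `R`, and so does the binomial CDF at `k`: it is a sum of Bernstein polynomials whose derivative
telescopes to `-n b_{n-1,k}`, which is nonpositive on `[0, 1]`.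
-/

open Polynomial in
theorem derivative_sum_bernsteinPolynomial (R : Type*) [CommRing R] (n k : ℕ) :
    derivative (∑ j ∈ range (k + 1), bernsteinPolynomial R n j) =
      -n * bernsteinPolynomial R (n - 1) k := by
  induction k with
  | zero => simp [bernsteinPolynomial.derivative_zero]
  | succ k ih =>
    rw [sum_range_succ, derivative_add, ih, bernsteinPolynomial.derivative_succ]
    ring

theorem bernsteinPolynomial_eval_nonneg (n ν : ℕ) {x : ℝ} (h0 : 0 ≤ x) (h1 : x ≤ 1) :
    0 ≤ (bernsteinPolynomial ℝ n ν).eval x := by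
  have : 0 ≤ 1 - x := sub_nonneg.mpr h1
  simp only [bernsteinPolynomial, Polynomial.eval_mul, Polynomial.eval_pow,
    Polynomial.eval_sub, Polynomial.eval_one, Polynomial.eval_X, Polynomial.eval_natCast]
  positivity

theorem binCDF_eq_eval (n k : ℕ) (R : ℝ) :
    binCDF n k R = (∑ j ∈ range (k + 1), bernsteinPolynomial ℝ n j).eval R := by
  simp [binCDF, bernsteinPolynomial, Polynomial.eval_finsetSum]

theorem binCDF_nonneg (n k : ℕ) {R : ℝ} (h0 : 0 ≤ R) (h1 : R ≤ 1) : 0 ≤ binCDF n k R := by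
  rw [binCDF_eq_eval, Polynomial.eval_finsetSum]
  exact sum_nonneg fun j _ => bernsteinPolynomial_eval_nonneg n j h0 h1

theorem binCDF_antitoneOn (n k : ℕ) : AntitoneOn (binCDF n k) (Set.Icc 0 1) := by
  set p := ∑ j ∈ range (k + 1), bernsteinPolynomial ℝ n j
  have hp : binCDF n k = fun R => p.eval R := funext (binCDF_eq_eval n k)
  rw [hp]
  refine antitoneOn_of_deriv_nonpos (convex_Icc 0 1) p.continuousOn
    p.differentiable.differentiableOn fun R hR => ?_
  rw [interior_Icc] at hR
  rw [Polynomial.deriv, derivative_sum_bernsteinPolynomial, Polynomial.eval_mul,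
    Polynomial.eval_neg, Polynomial.eval_natCast, neg_mul, neg_nonpos]
  exact mul_nonneg n.cast_nonneg (bernsteinPolynomial_eval_nonneg _ _ hR.1.le hR.2.le)

-- After cross-multiplying, the two sides differ by `k (n - k) (R₂ - R₁) ≥ 0`.
theorem mul_sub_div_mul_sub_le {n k R₁ R₂ : ℝ} (hk0 : 0 ≤ k) (hkn : k ≤ n) (hk : k < n * R₁)
    (h12 : R₁ ≤ R₂) : R₂ * (n - k) / (n * R₂ - k) ≤ R₁ * (n - k) / (n * R₁ - k) := by
  have hn : 0 ≤ n := hk0.trans hkn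
  have hk₂ : k < n * R₂ := hk.trans_le (mul_le_mul_of_nonneg_left h12 hn)
  rw [div_le_div_iff₀ (sub_pos.mpr hk₂) (sub_pos.mpr hk)]
  nlinarith [mul_nonneg (mul_nonneg hk0 (sub_nonneg.mpr hkn)) (sub_nonneg.mpr h12)]

theorem mul_sub_div_mul_sub_mul_binCDF_le {n k : ℕ} {R₁ R₂ : ℝ} (h0 : 0 ≤ R₁)
    (hk : (k : ℝ) < n * R₁) (h12 : R₁ ≤ R₂) (h2 : R₂ ≤ 1) :
    R₂ * (n - k) / (n * R₂ - k) * binCDF n k R₂ ≤ R₁ * (n - k) / (n * R₁ - k) * binCDF n k R₁ := by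
  have hkn : (k : ℝ) ≤ n := by nlinarith
  refine mul_le_mul (mul_sub_div_mul_sub_le k.cast_nonneg hkn hk h12)
    (binCDF_antitoneOn n k ⟨h0, h12.trans h2⟩ ⟨h0.trans h12, h2⟩ h12)
    (binCDF_nonneg n k (h0.trans h12) h2) ?_
  exact div_nonneg (mul_nonneg h0 (sub_nonneg.mpr hkn)) (sub_pos.mpr hk).le

theorem gam_eq_natCeil (n : ℕ) (R : ℝ) : gam n R = ⌈(n : ℝ) * R⌉₊ := by
  simp_rw [gam, ← Nat.ceil_le]
  exact csInf_Ici

theorem intCeil_lt_of_lt_natCeil_sub_one {x y : ℝ} (hy : 0 ≤ y) (h : x < ⌈y⌉₊ - 1) :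
    (⌈x⌉ : ℝ) < y := by
  have hx : ⌈x⌉ ≤ (⌈y⌉₊ : ℤ) - 1 := Int.ceil_le.mpr (by push_cast; exact h.le)
  have hx' : (⌈x⌉ : ℝ) ≤ ⌈y⌉₊ - 1 := by exact_mod_cast hx
  linarith [Nat.ceil_lt_add_one hy]

theorem stmt_9 (n : ℕ) (hn : 0 < n) (R1 R2 : ℝ) (h0 : 0 < R1) (h12 : R1 < R2)
    (h1 : R2 < 1) (t : ℝ) (ht : t ∈ Set.Ico (0 : ℝ) (((gam n R1 : ℝ) - 1) / n)) :
    g n R2 t ≤ g n R1 t := by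
  obtain ⟨ht0, htlt⟩ := ht
  have hn' : (0 : ℝ) < n := by exact_mod_cast hn
  have hne1 : t ≠ ((gam n R1 : ℝ) - 1) / n := htlt.ne
  have hne2 : t ≠ ((gam n R2 : ℝ) - 1) / n := by
    refine (htlt.trans_le ?_).ne
    gcongr
    rw [gam_eq_natCeil, gam_eq_natCeil]
    gcongr
  rw [g, g, if_neg hne1, if_neg hne2]
  rw [gam_eq_natCeil, lt_div_iff₀ hn', mul_comm] at htlt
  have hk := intCeil_lt_of_lt_natCeil_sub_one (by positivity) htlt
  obtain ⟨k, hk_eq⟩ := Int.eq_ofNat_of_zero_le (Int.ceil_nonneg (by positivity : 0 ≤ (n : ℝ) * t))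
  rw [hk_eq, Int.cast_natCast] at hk ⊢
  rw [Int.toNat_natCast]
  exact mul_sub_div_mul_sub_mul_binCDF_le h0.le hk h12.le h1.le
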